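/- arXiv:0805.4358 — 3 statements merged into one kernel-verified Lean document; each statement's English description precedes it below -/
import Mathlib

section
/- For all nonnegative integers j and ℓ, the alternating sum ∑_{i=0}^{j} (-1)^i * C(j,i) * C(-i,ℓ) equals (-1)^{ℓ-j} * C(ℓ-1, ℓ-j), where C(-i,ℓ) = (-i)(-i-1)⋯(-i-ℓ+1)/ℓ! is the generalized binomial coefficient. -/
/-- The generalized binomial coefficient `C(a,b)` for integers `a, b`:
`C(a,b) = a(a-1)⋯(a-b+1)/b!` for `b ≥ 0`, and `0` for `b < 0`. -/
def zchoose (a b : ℤ) : ℚ :=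
  if b < 0 then 0
  else (∏ i ∈ Finset.range b.toNat, ((a : ℚ) - i)) / (b.toNat.factorial : ℚ)

lemma zchoose_of_neg (a b : ℤ) (hb : b < 0) : zchoose a b = 0 := by
  simp [zchoose, hb]

lemma zchoose_zero_right (a : ℤ) : zchoose a 0 = 1 := by
  simp [zchoose]

lemma zchoose_pascal (a b : ℤ) :
    zchoose a b = zchoose (a - 1) b + zchoose (a - 1) (b - 1) := by
  rcases lt_or_ge b 0 with hb | hb
  · rw [zchoose_of_neg _ _ hb, zchoose_of_neg _ _ hb, zchoose_of_neg _ _ (by omega)]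
    ring
  · obtain ⟨n, rfl⟩ := Int.eq_ofNat_of_zero_le hb
    cases n with
    | zero =>
      simp [zchoose_zero_right, zchoose_of_neg _ (-1) (by norm_num)]
    | succ m =>
      have h1 : ¬ ((m + 1 : ℕ) : ℤ) < 0 := by omega
      have h2 : ¬ ((((m : ℕ) + 1 : ℕ) : ℤ) - 1) < 0 := by omega
      have h3 : (((m + 1 : ℕ) : ℤ)).toNat = m + 1 := by omega
      have h4 : (((((m : ℕ) + 1 : ℕ)) : ℤ) - 1).toNat = m := by omega
      rw [zchoose, zchoose, zchoose, if_neg h1, if_neg h1, if_neg h2, h3, h4]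
      have hp1 : ∏ i ∈ Finset.range (m + 1), ((a : ℚ) - i)
          = (a : ℚ) * ∏ i ∈ Finset.range m, (((a : ℚ) - 1) - i) := by
        rw [Finset.prod_range_succ']
        rw [mul_comm]
        congr 1
        · norm_num
        · apply Finset.prod_congr rfl
          intro i _
          push_cast
          ring
      have hp2 : ∏ i ∈ Finset.range (m + 1), (((a : ℚ) - 1) - i)
          = (∏ i ∈ Finset.range m, (((a : ℚ) - 1) - i)) * (((a : ℚ) - 1) - m) := by
        rw [Finset.prod_range_succ]
      push_cast
      rw [hp1, hp2, Nat.factorial_succ]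
      have hm : ((m.factorial : ℚ)) ≠ 0 := by exact_mod_cast m.factorial_ne_zero
      have hm1 : (((m + 1) : ℕ) : ℚ) ≠ 0 := by positivity
      push_cast
      field_simp
      ring

lemma zchoose_key (j : ℕ) : ∀ a b : ℤ,
    ∑ i ∈ Finset.range (j + 1),
        (-1 : ℚ) ^ i * (j.choose i : ℚ) * zchoose (a - i) b
      = zchoose (a - j) (b - j) := by
  induction j with
  | zero => intro a b; simp
  | succ j ih =>
    intro a b
    rw [Finset.sum_range_succ']
    have hterm : ∀ i ∈ Finset.range (j + 1),
        (-1 : ℚ) ^ (i + 1) * ((j + 1).choose (i + 1) : ℚ) * zchoose (a - ((i : ℕ) + 1 : ℕ)) b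
          = -((-1 : ℚ) ^ i * (j.choose i : ℚ) * zchoose ((a - 1) - i) b)
            + (-1 : ℚ) ^ (i + 1) * (j.choose (i + 1) : ℚ) * zchoose ((a - 1) - i) b := by
      intro i _
      rw [Nat.choose_succ_succ]
      have e : a - (((i : ℕ) + 1 : ℕ) : ℤ) = (a - 1) - i := by push_cast; ring
      rw [e]
      push_cast
      ring
    rw [Finset.sum_congr rfl hterm, Finset.sum_add_distrib]
    have hA : ∑ i ∈ Finset.range (j + 1),
        -((-1 : ℚ) ^ i * (j.choose i : ℚ) * zchoose ((a - 1) - i) b)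
        = - zchoose ((a - 1) - j) (b - j) := by
      rw [Finset.sum_neg_distrib, ih (a - 1) b]
    have hB : (∑ i ∈ Finset.range (j + 1),
        (-1 : ℚ) ^ (i + 1) * (j.choose (i + 1) : ℚ) * zchoose ((a - 1) - i) b)
        + (-1 : ℚ) ^ 0 * (((j + 1).choose 0 : ℕ) : ℚ) * zchoose (a - ((0 : ℕ) : ℤ)) b
        = zchoose (a - j) (b - j) := by
      rw [Finset.sum_range_succ, Nat.choose_succ_self]
      have := ih a b
      rw [Finset.sum_range_succ'] at this
      have hc : ∀ i ∈ Finset.range j,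
          (-1 : ℚ) ^ (i + 1) * (j.choose (i + 1) : ℚ) * zchoose ((a - 1) - i) b
          = (-1 : ℚ) ^ (i + 1) * (j.choose (i + 1) : ℚ) * zchoose (a - ((i + 1 : ℕ) : ℤ)) b := by
        intro i _
        have e : (a - 1) - (i : ℤ) = a - ((i + 1 : ℕ) : ℤ) := by push_cast; ring
        rw [e]
      rw [Finset.sum_congr rfl hc]
      simp only [Nat.cast_zero, sub_zero, pow_zero, Nat.choose_zero_right, Nat.cast_one,
        one_mul, mul_zero, zero_mul, add_zero, Nat.cast_ofNat] at this ⊢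
      linarith [this]
    rw [add_assoc, hB, hA]
    have hp := zchoose_pascal (a - j) (b - j)
    have e1 : a - (((j : ℕ) + 1 : ℕ) : ℤ) = (a - j) - 1 := by push_cast; ring
    have e2 : b - (((j : ℕ) + 1 : ℕ) : ℤ) = (b - j) - 1 := by push_cast; ring
    have e3 : (a - 1) - (j : ℤ) = (a - j) - 1 := by ring
    rw [e1, e2, e3]
    linarith

lemma zchoose_neg_nat (m k : ℕ) :
    zchoose (-(m : ℤ)) (k : ℤ) = (-1 : ℚ) ^ k * zchoose ((m : ℤ) + k - 1) (k : ℤ) := by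
  have hk : ¬ ((k : ℤ) < 0) := by omega
  have hk2 : ((k : ℤ)).toNat = k := by omega
  rw [zchoose, zchoose, if_neg hk, if_neg hk, hk2]
  have h1 : ∏ i ∈ Finset.range k, ((-(m : ℤ) : ℚ) - i)
      = (-1 : ℚ) ^ k * ∏ i ∈ Finset.range k, ((m : ℚ) + i) := by
    calc ∏ i ∈ Finset.range k, ((-(m : ℤ) : ℚ) - i)
        = ∏ i ∈ Finset.range k, ((-1 : ℚ) * ((m : ℚ) + i)) := by
          apply Finset.prod_congr rfl; intro i _; push_cast; ring
      _ = (∏ _i ∈ Finset.range k, (-1 : ℚ)) * ∏ i ∈ Finset.range k, ((m : ℚ) + i) := by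
          rw [Finset.prod_mul_distrib]
      _ = (-1 : ℚ) ^ k * ∏ i ∈ Finset.range k, ((m : ℚ) + i) := by
          rw [Finset.prod_const, Finset.card_range]
  have h2 : ∏ i ∈ Finset.range k, ((((m : ℤ) + k - 1 : ℤ) : ℚ) - i)
      = ∏ i ∈ Finset.range k, ((m : ℚ) + i) := by
    rw [← Finset.prod_range_reflect (fun i => (m : ℚ) + i) k]
    apply Finset.prod_congr rfl
    intro i hi
    rw [Finset.mem_range] at hi
    have e : ((k - 1 - i : ℕ) : ℤ) = (k : ℤ) - 1 - i := by omega
    have e2 : ((k - 1 - i : ℕ) : ℚ) = (k : ℚ) - 1 - i := by exact_mod_cast e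
    simp only [e2]
    push_cast
    ring
  push_cast at h1 h2 ⊢
  rw [h1, h2, mul_div_assoc]

/-- `∑_{i=0}^{j} (-1)^i C(j,i) C(-i,ℓ) = (-1)^{ℓ-j} C(ℓ-1, ℓ-j)`, with generalized
binomial coefficients. -/
theorem sum_alternating_choose_neg (j l : ℕ) :
    ∑ i ∈ Finset.range (j+1),
        (-1 : ℚ) ^ i * (j.choose i : ℚ) * zchoose (-(i : ℤ)) (l : ℤ)
      = (-1 : ℚ) ^ ((l : ℤ) - (j : ℤ)) * zchoose ((l : ℤ) - 1) ((l : ℤ) - (j : ℤ)) := by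
  have hk := zchoose_key j 0 (l : ℤ)
  have hL : ∑ i ∈ Finset.range (j+1),
      (-1 : ℚ) ^ i * (j.choose i : ℚ) * zchoose (-(i : ℤ)) (l : ℤ)
      = ∑ i ∈ Finset.range (j+1),
      (-1 : ℚ) ^ i * (j.choose i : ℚ) * zchoose ((0 : ℤ) - i) (l : ℤ) := by
    apply Finset.sum_congr rfl
    intro i _
    rw [zero_sub]
  rw [hL, hk, zero_sub]
  rcases lt_or_ge l j with h | h
  · rw [zchoose_of_neg _ _ (by omega), zchoose_of_neg _ _ (by omega), mul_zero]
  · obtain ⟨k, rfl⟩ : ∃ k : ℕ, l = j + k := ⟨l - j, by omega⟩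
    have e : ((j + k : ℕ) : ℤ) - (j : ℤ) = (k : ℤ) := by push_cast; ring
    rw [e, zpow_natCast, zchoose_neg_nat j k]
    have e2 : ((j : ℤ) + k - 1) = ((j + k : ℕ) : ℤ) - 1 := by push_cast; ring
    rw [e2]
end

section
/- (Abbas–Bouroubi identity.) Let f(x) = 1 + ∑_{i≥1} f_i x^i be a formal power series and define f_m(i) = the m-th derivative of f(x)^i evaluated at x = 0 (equivalently, f_m(i) = m! · [x^m] f(x)^i). Then for all integers m ≥ r ≥ 1, B_{m,r}(1, f₁(2), f₂(3), f₃(4), …) = C(m-1, r-1) · f_{m-r}(m), where the k-th argument of the Bell polynomial is f_{k-1}(k). -/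
/-- Index set for the partial Bell polynomial `B_{m,r}`: sequences
`(r₁, …, r_m)` of nonnegative integers with `r₁+⋯+r_m = r` and
`r₁+2r₂+⋯+m·r_m = m`. -/
def bellIndex (m r : ℕ) : Finset (Fin m → ℕ) :=
  (Fintype.piFinset fun _ => Finset.range (m+1)).filter
    fun c => (∑ i, c i) = r ∧ (∑ i, (i.1+1) * c i) = m

/-- The partial Bell polynomial `B_{m,r}(x₁,x₂,…)`, where `x i` is the `i`-th variable:
`B_{m,r} = ∑ m!/(r₁!⋯r_m!) ∏ (x_i/i!)^{r_i}`. -/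
def partialBell (x : ℕ → ℚ) (m r : ℕ) : ℚ :=
  ∑ c ∈ bellIndex m r,
    ((m.factorial : ℚ) / ∏ i, ((c i).factorial : ℚ)) *
      ∏ i, (x (i.1+1) / ((i.1+1).factorial : ℚ)) ^ c i

/-!
The generating function of the partial Bell polynomials gives `B_{m,r}(x) = m!/r! · [t^m] g^r`
with `g = ∑ x_k t^k / k!`. For `x_k = f_{k-1}(k)` the series `g` is the solution `G` of
`G = t · f(G)`: Lagrange inversion `n [t^n] G^k = k [t^(n-k)] f^n` identifies the coefficients
of `G` for `k = 1`, and evaluates `[t^m] G^r` for `(n, k) = (m, r)`.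

Lagrange inversion is proved by induction on `n`: writing `G^k = t^k (f^k)(G)` and applying the
induction hypothesis to the coefficients of the `G^j` turns `N [t^(k+N)] G^k` into
`[t^N] (t (f^k)' f^N)`, and `(k + N) (f^k)' f^N = k (f^(k+N))'`.
-/

open PowerSeries Finset
open scoped Nat

namespace PowerSeries

variable {R : Type*} [CommRing R]

theorem coeff_X_mul_derivative (F : R⟦X⟧) (n : ℕ) :
    coeff n (X * d⁄dX R F) = n * coeff n F := by
  cases n with
  | zero => simp
  | succ n => rw [coeff_succ_X_mul, coeff_derivative, mul_comm]; push_cast; ring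

theorem coeff_X_mul_derivative_mul (F H : R⟦X⟧) (n : ℕ) :
    coeff n (X * d⁄dX R F * H) = ∑ j ∈ range (n + 1), coeff j F * (j * coeff (n - j) H) := by
  rw [coeff_mul,
    Nat.sum_antidiagonal_eq_sum_range_succ (fun i j => coeff i (X * d⁄dX R F) * coeff j H)]
  refine sum_congr rfl fun j _ => ?_
  rw [coeff_X_mul_derivative]
  ring

theorem coeff_subst_eq_sum_range {F G : R⟦X⟧} (hG : constantCoeff G = 0) (n : ℕ) :
    coeff n (F.subst G) = ∑ j ∈ range (n + 1), coeff j F * coeff n (G ^ j) := by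
  rw [coeff_subst' (HasSubst.of_constantCoeff_zero' hG)]
  obtain ⟨H, rfl⟩ : X ∣ G := X_dvd_iff.2 hG
  refine finsum_eq_sum_of_support_subset _ fun j hj => ?_
  rw [Function.mem_support, mul_pow, coeff_X_pow_mul'] at hj
  simp only [coe_range, Set.mem_Iio]
  by_contra h
  exact hj (by rw [if_neg (by omega), smul_zero])

theorem exists_eq_X_mul_subst {f : R⟦X⟧} (hf : IsUnit (constantCoeff f)) :
    ∃ G : R⟦X⟧, G = X * f.subst G := by
  obtain ⟨u, rfl⟩ := isUnit_iff_constantCoeff.2 hf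
  have hP : constantCoeff (X * (↑u⁻¹ : R⟦X⟧)) = 0 := by simp
  have hP' : IsUnit (coeff 1 (X * (↑u⁻¹ : R⟦X⟧))) := by
    rw [coeff_succ_X_mul, coeff_zero_eq_constantCoeff_apply]
    exact (Units.isUnit _).map _
  -- `G` is the compositional inverse of `X / f`.
  set G : R⟦X⟧ := substInvOfIsUnit _ hP'
  have hG : HasSubst G := HasSubst.substInvOfIsUnit _ hP'
  have hPG : (X * (↑u⁻¹ : R⟦X⟧)).subst G = (X : R⟦X⟧) :=
    subst_substInvOfIsUnit_right _ hP hP'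
  have hXG : (X : R⟦X⟧).subst G = G := subst_X hG
  have h1 : (1 : R⟦X⟧).subst G = (1 : R⟦X⟧) := by
    rw [← coe_substAlgHom hG, map_one]
  have hu : (↑u⁻¹ : R⟦X⟧).subst G * (↑u : R⟦X⟧).subst G = 1 := by
    rw [← subst_mul hG, Units.inv_mul, h1]
  refine ⟨G, ?_⟩
  rw [subst_mul hG, hXG] at hPG
  calc G = G * ((↑u⁻¹ : R⟦X⟧).subst G * (↑u : R⟦X⟧).subst G) := by rw [hu, mul_one]
    _ = X * (↑u : R⟦X⟧).subst G := by rw [← mul_assoc, hPG]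

theorem coeff_add_pow_eq_sum_of_eq_X_mul_subst {f G : R⟦X⟧} (hG : G = X * f.subst G)
    (k N : ℕ) :
    coeff (k + N) (G ^ k) = ∑ j ∈ range (N + 1), coeff j (f ^ k) * coeff N (G ^ j) := by
  have hG0 : constantCoeff G = 0 := by rw [hG]; simp
  rw [hG, mul_pow, ← subst_pow (HasSubst.of_constantCoeff_zero' hG0), ← hG, coeff_X_pow_mul',
    if_pos (Nat.le_add_right k N), Nat.add_sub_cancel_left, coeff_subst_eq_sum_range hG0]

theorem natCast_mul_X_mul_derivative_pow_mul_pow (f : R⟦X⟧) (k N : ℕ) :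
    ((k + N : ℕ) : R⟦X⟧) * (X * d⁄dX R (f ^ k) * f ^ N) =
      (k : R⟦X⟧) * (X * d⁄dX R (f ^ (k + N))) := by
  cases k with
  | zero => simp
  | succ k =>
    rw [derivative_pow, derivative_pow, Nat.add_sub_cancel, show k + 1 + N - 1 = k + N by omega,
      pow_add]
    push_cast
    ring

/-- Lagrange inversion. -/
theorem coeff_pow_of_eq_X_mul_subst [IsAddTorsionFree R] {f G : R⟦X⟧} (hG : G = X * f.subst G)
    {n k : ℕ} (hkn : k ≤ n) : n * coeff n (G ^ k) = k * coeff (n - k) (f ^ n) := by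
  induction n using Nat.strong_induction_on generalizing k with
  | _ n ih =>
  obtain ⟨N, rfl⟩ := Nat.exists_eq_add_of_le hkn
  have hexpand := coeff_add_pow_eq_sum_of_eq_X_mul_subst hG k N
  obtain rfl | hN := Nat.eq_zero_or_pos N
  · rw [hexpand]; simp
  obtain rfl | hk := Nat.eq_zero_or_pos k
  · simp [coeff_one, hN.ne']
  have hsum : (N : R) * coeff (k + N) (G ^ k) = coeff N (X * d⁄dX R (f ^ k) * f ^ N) := by
    rw [hexpand, mul_sum, coeff_X_mul_derivative_mul]
    refine sum_congr rfl fun j hj => ?_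
    rw [← ih N (by omega) (Nat.lt_succ_iff.1 (mem_range.1 hj))]
    ring
  have key : N • (((k + N : ℕ) : R) * coeff (k + N) (G ^ k)) =
      N • ((k : R) * coeff (k + N - k) (f ^ (k + N))) := by
    simp only [nsmul_eq_mul, Nat.add_sub_cancel_left]
    calc _ = coeff N (((k + N : ℕ) : R⟦X⟧) * (X * d⁄dX R (f ^ k) * f ^ N)) := by
          rw [← map_natCast (C (R := R)), coeff_C_mul, ← hsum]; ring
      _ = _ := by
          rw [natCast_mul_X_mul_derivative_pow_mul_pow, ← map_natCast (C (R := R)), coeff_C_mul,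
            coeff_X_mul_derivative]
          ring
  exact nsmul_right_injective hN.ne' key

theorem coeff_pow_eq_of_X_pow_dvd_sub {g p : R⟦X⟧} {m : ℕ}
    (h : X ^ (m + 1) ∣ g - p) (r : ℕ) : coeff m (g ^ r) = coeff m (p ^ r) := by
  have := X_pow_dvd_iff.1 (h.trans (sub_dvd_pow_sub_pow g p r)) m (lt_add_one m)
  rwa [map_sub, sub_eq_zero] at this

end PowerSeries

theorem bellIndex_eq_filter (m r : ℕ) :
    bellIndex m r =
      (piAntidiag univ r).filter fun c : Fin m → ℕ => ∑ i, (i.1 + 1) * c i = m := by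
  ext c
  simp only [bellIndex, mem_filter, Fintype.mem_piFinset, mem_range, mem_piAntidiag, mem_univ,
    implies_true, and_true, and_iff_right_iff_imp, and_imp]
  intro _ hm i
  have : (i.1 + 1) * c i ≤ ∑ j, (j.1 + 1) * c j :=
    single_le_sum (f := fun j : Fin m => (j.1 + 1) * c j) (fun _ _ => Nat.zero_le _) (mem_univ i)
  nlinarith

theorem partialBell_congr {x y : ℕ → ℚ} (h : ∀ k, 1 ≤ k → x k = y k) (m r : ℕ) :
    partialBell x m r = partialBell y m r := by
  simp only [partialBell, h _ (Nat.le_add_left 1 _)]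

theorem partialBell_eq_coeff_pow (g : ℚ⟦X⟧) (hg : constantCoeff g = 0) (m r : ℕ) :
    partialBell (fun k => k ! * coeff k g) m r = m ! / r ! * coeff m (g ^ r) := by
  set p : ℚ⟦X⟧ := ∑ i : Fin m, C (coeff (i.1 + 1) g) * X ^ (i.1 + 1)
  have hp : X ^ (m + 1) ∣ g - p := by
    refine X_pow_dvd_iff.2 fun d hd => ?_
    simp only [p, map_sub, map_sum, coeff_C_mul_X_pow]
    cases d with
    | zero => simp [hg]
    | succ e =>
      have he : e < m := by omega
      rw [sum_eq_single ⟨e, he⟩ (fun i _ hi => if_neg fun h => hi (Fin.ext (by simp; omega)))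
        (by simp), if_pos rfl, sub_self]
  have hterm : ∀ c : Fin m → ℕ, ∏ i, (C (coeff (i.1 + 1) g) * X ^ (i.1 + 1)) ^ c i =
      C (∏ i, coeff (i.1 + 1) g ^ c i) * X ^ (∑ i, (i.1 + 1) * c i) := by
    intro c
    simp only [mul_pow, prod_mul_distrib, map_prod, map_pow, ← pow_mul, prod_pow_eq_pow_sum]
  rw [coeff_pow_eq_of_X_pow_dvd_sub hp, Finset.sum_pow_eq_sum_piAntidiag, map_sum, mul_sum,
    partialBell, bellIndex_eq_filter, sum_filter]
  refine sum_congr rfl fun c hc => ?_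
  rw [hterm, ← map_natCast C, ← mul_assoc, ← map_mul, coeff_C_mul_X_pow, eq_comm]
  by_cases hm : ∑ i, (i.1 + 1) * c i = m
  · rw [if_pos hm, if_pos hm.symm]
    have hspec := Nat.multinomial_spec univ c
    rw [(mem_piAntidiag.1 hc).1] at hspec
    have hfac : (∏ i, ((c i)! : ℚ)) ≠ 0 := prod_ne_zero_iff.2 fun i _ => by positivity
    have hx : ∀ i : Fin m,
        ((i.1 + 1)! * coeff (i.1 + 1) g : ℚ) / (i.1 + 1)! = coeff (i.1 + 1) g :=
      fun i => mul_div_cancel_left₀ _ (by positivity)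
    simp only [hx]
    rw [div_mul_eq_mul_div, div_mul_eq_mul_div, div_eq_div_iff (by positivity) hfac, ← hspec]
    push_cast
    ring
  · rw [if_neg hm, if_neg (Ne.symm hm), mul_zero]

/-- Abbas–Bouroubi identity: if `f` is a formal power series with constant term `1`
and `f_m(i) := m!·[x^m] f^i`, then for `m ≥ r ≥ 1`,
`B_{m,r}(1, f₁(2), f₂(3), …) = C(m-1, r-1) · f_{m-r}(m)`,
the `k`-th Bell argument being `f_{k-1}(k)`. -/
theorem partialBell_powerSeries_pow (f : PowerSeries ℚ)
    (hf : PowerSeries.constantCoeff (R := ℚ) f = 1) (m r : ℕ) (h1 : 1 ≤ r) (h2 : r ≤ m) :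
    partialBell (fun k => ((k-1).factorial : ℚ) * PowerSeries.coeff (R := ℚ) (k-1) (f ^ k)) m r
      = ((m-1).choose (r-1) : ℚ) * (((m-r).factorial : ℚ) * PowerSeries.coeff (R := ℚ) (m-r) (f ^ m)) := by
  obtain ⟨G, hG⟩ := exists_eq_X_mul_subst (f := f) (by simp [hf])
  have hG0 : constantCoeff G = 0 := by rw [hG]; simp
  have hcoeff : ∀ k, 1 ≤ k → ((k - 1)! : ℚ) * coeff (k - 1) (f ^ k) = k ! * coeff k G := by
    intro k hk
    have := coeff_pow_of_eq_X_mul_subst hG hk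
    rw [pow_one] at this
    rw [← Nat.mul_factorial_pred (by omega : k ≠ 0)]
    push_cast
    linear_combination (-((k - 1)! : ℚ)) * this
  rw [partialBell_congr hcoeff, partialBell_eq_coeff_pow G hG0]
  have hlagrange := coeff_pow_of_eq_X_mul_subst hG h2
  have hchoose := Nat.choose_mul_factorial_mul_factorial (show r - 1 ≤ m - 1 by omega)
  rw [show m - 1 - (r - 1) = m - r by omega] at hchoose
  rw [← Nat.mul_factorial_pred (by omega : m ≠ 0),
    ← Nat.mul_factorial_pred (by omega : r ≠ 0), ← hchoose]
  push_cast
  field_simp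
  linear_combination ((m - 1).choose (r - 1) : ℚ) * hlagrange
end

section
/- Let {φ_n(x)}_{n≥0} be a binomial sequence of polynomials. Then for all integers m ≥ r ≥ 1, B_{m,r}(1, 2φ₁(1), 3φ₂(1), 4φ₃(1), …) = C(m, r) · φ_{m-r}(r), where the k-th argument of the Bell polynomial is k·φ_{k-1}(1). -/
/-
Both sides are coefficients of exponential generating functions. With `a i = x (i+1)/(i+1)!`,
the multinomial theorem gives `B_{m,r}(x) = m!/r! · [u^m] (u · ∑ a_i u^i)^r`. For
`x_k = k φ_{k-1}(1)` the inner series is `Φ(1, u)`, where `Φ(x, u) = ∑ φ_n(x) u^n/n!`, and the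
binomial convolution says exactly `Φ(x + y, u) = Φ(x, u) Φ(y, u)`, so `Φ(1, u)^r = Φ(r, u)`.
Hence `B_{m,r} = m!/r! · φ_{m-r}(r)/(m-r)! = C(m,r) φ_{m-r}(r)`.
-/

open PowerSeries
open Finset hiding mk

theorem PowerSeries.coeff_pow_eq_of_trunc_eq {R : Type*} [CommSemiring R] {f g : R⟦X⟧} {n : ℕ}
    (h : trunc (n + 1) f = trunc (n + 1) g) (r : ℕ) : coeff n (f ^ r) = coeff n (g ^ r) := by
  rw [← coeff_coe_trunc_of_lt (lt_add_one n), ← trunc_trunc_pow, h, trunc_trunc_pow,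
    coeff_coe_trunc_of_lt (lt_add_one n)]

lemma bellIndex_eq_filter_piAntidiag (m r : ℕ) :
    bellIndex m r = (piAntidiag univ r).filter fun c => ∑ i : Fin m, (i.1 + 1) * c i = m := by
  ext c
  simp only [bellIndex, mem_filter, Fintype.mem_piFinset, mem_range, mem_piAntidiag, mem_univ,
    implies_true, and_true]
  refine ⟨fun h => h.2, fun h => ⟨fun i => ?_, h⟩⟩
  have : (i.1 + 1) * c i ≤ ∑ j : Fin m, (j.1 + 1) * c j :=
    single_le_sum (f := fun j : Fin m => (j.1 + 1) * c j) (fun _ _ => Nat.zero_le _) (mem_univ i)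
  nlinarith

lemma trunc_X_mul_mk {R : Type*} [CommSemiring R] (a : ℕ → R) (m : ℕ) :
    trunc (m + 1) (X * mk a) = trunc (m + 1) (∑ i : Fin m, monomial (i.1 + 1) (a i)) := by
  ext k
  rw [coeff_trunc, coeff_trunc, map_sum]
  split_ifs with hk
  · simp only [coeff_monomial]
    rcases k with _ | k
    · simp
    · rw [coeff_succ_X_mul, coeff_mk, sum_eq_single_of_mem ⟨k, by omega⟩ (mem_univ _)]
      · simp
      · intro i _ hi
        rw [if_neg fun h => hi (Fin.ext (Nat.add_right_cancel h).symm)]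
  · rfl

lemma coeff_X_mul_mk_pow {R : Type*} [CommSemiring R] (a : ℕ → R) (m r : ℕ) :
    coeff m ((X * mk a) ^ r)
      = ∑ c ∈ bellIndex m r, (Nat.multinomial univ c : R) * ∏ i : Fin m, a i ^ c i := by
  rw [coeff_pow_eq_of_trunc_eq (trunc_X_mul_mk a m), sum_pow_eq_sum_piAntidiag,
    bellIndex_eq_filter_piAntidiag, sum_filter, map_sum]
  refine sum_congr rfl fun c _ => ?_
  simp only [monomial_pow, prod_monomial, ← map_natCast (C (R := R)), coeff_C_mul, coeff_monomial,
    mul_comm (c _) (_ + 1), eq_comm (a := m), mul_ite, mul_zero]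

theorem partialBell_eq_coeff_pow_s6 (x : ℕ → ℚ) (m r : ℕ) :
    partialBell x m r
      = m.factorial / r.factorial
        * coeff m ((X * mk fun i => x (i + 1) / (i + 1).factorial) ^ r) := by
  rw [coeff_X_mul_mk_pow, partialBell, mul_sum]
  refine sum_congr rfl fun c hc => ?_
  have hsum : ∑ i, c i = r := by
    rw [bellIndex_eq_filter_piAntidiag, mem_filter, mem_piAntidiag] at hc
    exact hc.1.1
  have hspec := Nat.multinomial_spec univ c
  rw [hsum] at hspec
  rw [← mul_assoc]
  congr 1
  have hmult : (Nat.multinomial univ c : ℚ) ≠ 0 := mod_cast (Nat.multinomial_pos _ _).ne'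
  rw [← hspec]
  push_cast
  field_simp

noncomputable def evalEGF (φ : ℕ → Polynomial ℚ) (x : ℚ) : ℚ⟦X⟧ :=
  mk fun n => (φ n).eval x / n.factorial

def IsBinomialSequence (φ : ℕ → Polynomial ℚ) : Prop :=
  ∀ (n : ℕ) (x y : ℚ), (φ n).eval (x + y)
    = ∑ i ∈ range (n + 1), (n.choose i : ℚ) * (φ i).eval x * (φ (n - i)).eval y

section IsBinomialSequence

variable {φ : ℕ → Polynomial ℚ}

theorem IsBinomialSequence.evalEGF_add (hφ : IsBinomialSequence φ) (x y : ℚ) :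
    evalEGF φ (x + y) = evalEGF φ x * evalEGF φ y := by
  ext n
  rw [coeff_mul, Nat.sum_antidiagonal_eq_sum_range_succ_mk, evalEGF, coeff_mk, hφ, sum_div]
  refine sum_congr rfl fun i hi => ?_
  simp only [evalEGF, coeff_mk]
  rw [Nat.cast_choose ℚ (Nat.lt_succ_iff.mp (mem_range.mp hi))]
  field_simp

theorem IsBinomialSequence.evalEGF_natCast (hφ : IsBinomialSequence φ) {r : ℕ} (hr : 1 ≤ r) :
    evalEGF φ r = evalEGF φ 1 ^ r := by
  induction r, hr using Nat.le_induction with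
  | base => simp
  | succ r _ ih => rw [Nat.cast_succ, hφ.evalEGF_add, ih, pow_succ]

end IsBinomialSequence

theorem partialBell_binomial_sequence_general (φ : ℕ → Polynomial ℚ)
    (hbin : ∀ (n : ℕ) (x y : ℚ), (φ n).eval (x + y)
      = ∑ i ∈ Finset.range (n+1), (n.choose i : ℚ) * (φ i).eval x * (φ (n-i)).eval y)
    (m r : ℕ) (h1 : 1 ≤ r) :
    partialBell (fun k => (k : ℚ) * (φ (k-1)).eval 1) m r
      = (m.choose r : ℚ) * (φ (m-r)).eval (r : ℚ) := by
  have hφ : IsBinomialSequence φ := hbin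
  have hseries : (mk fun i => ((i + 1 : ℕ) : ℚ) * (φ (i + 1 - 1)).eval 1 / (i + 1).factorial)
      = evalEGF φ 1 := by
    ext i
    simp only [evalEGF, coeff_mk, Nat.add_sub_cancel, Nat.factorial_succ, Nat.cast_mul]
    field_simp
  rw [partialBell_eq_coeff_pow_s6, hseries, mul_pow, ← hφ.evalEGF_natCast h1, coeff_X_pow_mul']
  split_ifs with hrm
  · rw [evalEGF, coeff_mk, Nat.cast_choose ℚ hrm]
    field_simp
  · rw [Nat.choose_eq_zero_of_lt (not_le.mp hrm)]
    simp

/-- For a binomial sequence of polynomials `{φ_n}` and `m ≥ r ≥ 1`,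
`B_{m,r}(1, 2φ₁(1), 3φ₂(1), …) = C(m,r) · φ_{m-r}(r)`,
the `k`-th Bell argument being `k·φ_{k-1}(1)`. -/
theorem partialBell_binomial_sequence (φ : ℕ → Polynomial ℚ) (h0 : φ 0 = 1)
    (hbin : ∀ (n : ℕ) (x y : ℚ), (φ n).eval (x + y)
      = ∑ i ∈ Finset.range (n+1), (n.choose i : ℚ) * (φ i).eval x * (φ (n-i)).eval y)
    (m r : ℕ) (h1 : 1 ≤ r) (h2 : r ≤ m) :
    partialBell (fun k => (k : ℚ) * (φ (k-1)).eval 1) m r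
      = (m.choose r : ℚ) * (φ (m-r)).eval (r : ℚ) :=
  partialBell_binomial_sequence_general φ hbin m r h1
end
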